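/- If two diagonalizable norms ‖·‖, ‖·‖' are codiagonalized in a basis (e_i) ordered so that ‖e₁‖'/‖e₁‖ ≥ ⋯ ≥ ‖e_N‖'/‖e_N‖, then the i-th relative successive minimum satisfies λ_i(‖·‖,‖·‖') = log(‖e_i‖'/‖e_i‖). -/

import Mathlib

def IsVNorm (K : Type*) [NormedField K] {V : Type*} [AddCommGroup V] [Module K V]
    (f : V → ℝ) : Prop :=
  (∀ v, 0 ≤ f v) ∧ (∀ (a : K) (v : V), f (a • v) = ‖a‖ * f v) ∧
    (∀ v w, f (v + w) ≤ f v + f w) ∧ ∀ v, f v = 0 → v = 0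

/-- Orthogonality in the non-Archimedean (max/ℓ∞) sense. -/
def IsOrthMax {K V : Type*} [NormedField K] [AddCommGroup V] [Module K V] {N : ℕ}
    (f : V → ℝ) (B : Module.Basis (Fin N) K V) : Prop :=
  ∀ α : Fin N → K, f (∑ i, α i • B i) = ⨆ i, ‖α i‖ * f (B i)

/-- Orthogonality in the Archimedean (Euclidean/Hermitian, ℓ²) sense. -/
def IsOrthL2 {K V : Type*} [NormedField K] [AddCommGroup V] [Module K V] {N : ℕ}
    (f : V → ℝ) (B : Module.Basis (Fin N) K V) : Prop :=
  ∀ α : Fin N → K, (f (∑ i, α i • B i)) ^ 2 = ∑ i, (‖α i‖ * f (B i)) ^ 2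

noncomputable def lamMin (K : Type*) {V : Type*} [NormedField K] [AddCommGroup V]
    [Module K V] (f g : V → ℝ) (i : ℕ) : ℝ :=
  ⨆ W : {W : Submodule K V // i ≤ Module.finrank K W},
    ⨅ w : {w : V // w ∈ W.1 ∧ w ≠ 0}, Real.log (g (w : V) / f (w : V))

section SuccMinAux

variable {K V : Type*} [NormedField K] [AddCommGroup V] [Module K V] {N : ℕ}

lemma IsVNorm.pos' {f : V → ℝ} (hf : IsVNorm K f) {v : V} (hv : v ≠ 0) : 0 < f v :=
  (hf.1 v).lt_of_ne (fun h => hv (hf.2.2.2 v h.symm))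

lemma sm_key_le [Nonempty (Fin N)] {f g : V → ℝ} (hf : IsVNorm K f) (hg : IsVNorm K g)
    {B : Module.Basis (Fin N) K V}
    (hco : (IsOrthMax f B ∧ IsOrthMax g B) ∨ (IsOrthL2 f B ∧ IsOrthL2 g B))
    {c : ℝ} (hc : 0 ≤ c) (α : Fin N → K)
    (h : ∀ j, α j ≠ 0 → g (B j) ≤ c * f (B j)) :
    g (∑ j, α j • B j) ≤ c * f (∑ j, α j • B j) := by
  have hfv : 0 ≤ f (∑ j, α j • B j) := hf.1 _
  rcases hco with ⟨hfm, hgm⟩ | ⟨hf2, hg2⟩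
  · rw [hgm α]
    refine ciSup_le fun j => ?_
    by_cases hj : α j = 0
    · simpa [hj] using mul_nonneg hc hfv
    · calc ‖α j‖ * g (B j) ≤ ‖α j‖ * (c * f (B j)) :=
            mul_le_mul_of_nonneg_left (h j hj) (norm_nonneg _)
        _ = c * (‖α j‖ * f (B j)) := by ring
        _ ≤ c * f (∑ j, α j • B j) := by
            refine mul_le_mul_of_nonneg_left ?_ hc
            rw [hfm α]
            exact le_ciSup (f := fun k => ‖α k‖ * f (B k)) (Set.Finite.bddAbove (Set.finite_range _)) j
  · refine (pow_le_pow_iff_left₀ (hg.1 _) (mul_nonneg hc hfv) two_ne_zero).mp ?_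
    rw [hg2 α, mul_pow, hf2 α, Finset.mul_sum]
    refine Finset.sum_le_sum fun j _ => ?_
    by_cases hj : α j = 0
    · simp [hj]
    · calc (‖α j‖ * g (B j)) ^ 2 ≤ (‖α j‖ * (c * f (B j))) ^ 2 :=
            pow_le_pow_left₀ (mul_nonneg (norm_nonneg _) (hg.1 _))
              (mul_le_mul_of_nonneg_left (h j hj) (norm_nonneg _)) 2
        _ = c ^ 2 * (‖α j‖ * f (B j)) ^ 2 := by ring

lemma sm_key_ge [Nonempty (Fin N)] {f g : V → ℝ} (hf : IsVNorm K f) (hg : IsVNorm K g)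
    {B : Module.Basis (Fin N) K V}
    (hco : (IsOrthMax f B ∧ IsOrthMax g B) ∨ (IsOrthL2 f B ∧ IsOrthL2 g B))
    {c : ℝ} (hc : 0 ≤ c) (α : Fin N → K)
    (h : ∀ j, α j ≠ 0 → c * f (B j) ≤ g (B j)) :
    c * f (∑ j, α j • B j) ≤ g (∑ j, α j • B j) := by
  have hgv : 0 ≤ g (∑ j, α j • B j) := hg.1 _
  have hfv : 0 ≤ f (∑ j, α j • B j) := hf.1 _
  rcases hco with ⟨hfm, hgm⟩ | ⟨hf2, hg2⟩
  · rcases hc.eq_or_lt with rfl | hc'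
    · simpa using hgv
    · have key : f (∑ j, α j • B j) ≤ g (∑ j, α j • B j) / c := by
        rw [hfm α]
        refine ciSup_le fun j => ?_
        by_cases hj : α j = 0
        · simp only [hj, norm_zero, zero_mul]
          exact div_nonneg hgv hc'.le
        · rw [le_div_iff₀ hc']
          calc ‖α j‖ * f (B j) * c = ‖α j‖ * (c * f (B j)) := by ring
            _ ≤ ‖α j‖ * g (B j) := mul_le_mul_of_nonneg_left (h j hj) (norm_nonneg _)
            _ ≤ g (∑ j, α j • B j) := by
                rw [hgm α]
                exact le_ciSup (f := fun k => ‖α k‖ * g (B k)) (Set.Finite.bddAbove (Set.finite_range _)) j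
      have := (le_div_iff₀ hc').mp key
      linarith
  · refine (pow_le_pow_iff_left₀ (mul_nonneg hc hfv) hgv two_ne_zero).mp ?_
    rw [hg2 α, mul_pow, hf2 α, Finset.mul_sum]
    refine Finset.sum_le_sum fun j _ => ?_
    by_cases hj : α j = 0
    · simp [hj]
    · calc c ^ 2 * (‖α j‖ * f (B j)) ^ 2 = (‖α j‖ * (c * f (B j))) ^ 2 := by ring
        _ ≤ (‖α j‖ * g (B j)) ^ 2 :=
            pow_le_pow_left₀ (mul_nonneg (norm_nonneg _) (mul_nonneg hc (hf.1 _)))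
              (mul_le_mul_of_nonneg_left (h j hj) (norm_nonneg _)) 2

end SuccMinAux

/-- If two diagonalizable norms are codiagonalized in a basis ordered so that the
ratios `‖e_i‖'/‖e_i‖` are decreasing, then `λ_i(‖·‖,‖·‖') = log(‖e_i‖'/‖e_i‖)`. -/
theorem successive_minima_of_codiagonalized
    {K V : Type*} [NormedField K] [CompleteSpace K]
    [AddCommGroup V] [Module K V] [FiniteDimensional K V] {N : ℕ}
    (f g : V → ℝ) (hf : IsVNorm K f) (hg : IsVNorm K g)
    (B : Module.Basis (Fin N) K V)
    (hco : (IsOrthMax f B ∧ IsOrthMax g B) ∨ (IsOrthL2 f B ∧ IsOrthL2 g B))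
    (hord : ∀ i j : Fin N, i ≤ j → g (B j) / f (B j) ≤ g (B i) / f (B i)) :
    ∀ i : Fin N, lamMin K f g ((i : ℕ) + 1) = Real.log (g (B i) / f (B i)) := by
  intro i
  haveI : Nonempty (Fin N) := ⟨i⟩
  classical
  have hfB : ∀ j, 0 < f (B j) := fun j => hf.pos' (B.ne_zero j)
  have hgB : ∀ j, 0 < g (B j) := fun j => hg.pos' (B.ne_zero j)
  set r : Fin N → ℝ := fun j => g (B j) / f (B j) with hr_def
  have hrpos : ∀ j, 0 < r j := fun j => div_pos (hgB j) (hfB j)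
  have hN : Module.finrank K V = N := by
    rw [Module.finrank_eq_card_basis B, Fintype.card_fin]
  -- finrank of spans of subfamilies of the basis
  have hspan_rank : ∀ s : Finset (Fin N),
      Module.finrank K (Submodule.span K (B '' ↑s)) = s.card := by
    intro s
    have li : LinearIndependent K ((↑) : ((s.image B : Finset V) : Set V) → V) := by
      rw [Finset.coe_image]
      exact (((linearIndepOn_id_range_iff B.injective).mpr B.linearIndependent).mono (Set.image_subset_range B ↑s) : _)
    calc Module.finrank K (Submodule.span K (B '' ↑s))
        = Module.finrank K (Submodule.span K ((s.image B : Finset V) : Set V)) := by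
          rw [Finset.coe_image]
      _ = (s.image B).card := finrank_span_finset_eq_card li
      _ = s.card := Finset.card_image_of_injective s B.injective
  set U : Submodule K V := Submodule.span K (B '' ↑(Finset.Ici i)) with hU
  set W₀ : Submodule K V := Submodule.span K (B '' ↑(Finset.Iic i)) with hW₀
  have hUrank : Module.finrank K U = N - (i : ℕ) := by
    rw [hU, hspan_rank, Fin.card_Ici]
  have hW₀rank : Module.finrank K W₀ = (i : ℕ) + 1 := by
    rw [hW₀, hspan_rank, Fin.card_Iic]
  -- tail bound
  have tail_le : ∀ w, w ∈ U → w ≠ 0 → g w ≤ r i * f w := by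
    intro w hw hw0
    have hsupp : ∀ j, B.repr w j ≠ 0 → g (B j) ≤ r i * f (B j) := by
      intro j hj
      have hmem : j ∈ ((B.repr w).support : Set (Fin N)) := Finsupp.mem_support_iff.mpr hj
      have hji : i ≤ j := by
        have := B.mem_span_image.mp hw hmem
        simpa using this
      exact (div_le_iff₀ (hfB j)).mp (hord i j hji)
    have := sm_key_le hf hg hco (hrpos i).le (fun j => B.repr w j) hsupp
    rwa [B.sum_repr w] at this
  -- head bound
  have head_ge : ∀ w, w ∈ W₀ → w ≠ 0 → r i * f w ≤ g w := by
    intro w hw hw0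
    have hsupp : ∀ j, B.repr w j ≠ 0 → r i * f (B j) ≤ g (B j) := by
      intro j hj
      have hmem : j ∈ ((B.repr w).support : Set (Fin N)) := Finsupp.mem_support_iff.mpr hj
      have hji : j ≤ i := by
        have := B.mem_span_image.mp hw hmem
        simpa using this
      exact (le_div_iff₀ (hfB j)).mp (hord j i hji)
    have := sm_key_ge hf hg hco (hrpos i).le (fun j => B.repr w j) hsupp
    rwa [B.sum_repr w] at this
  -- global lower bound on ratio
  obtain ⟨jm, -, hjm⟩ := Finset.exists_min_image Finset.univ r ⟨i, Finset.mem_univ i⟩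
  have glb : ∀ w : V, w ≠ 0 → Real.log (r jm) ≤ Real.log (g w / f w) := by
    intro w hw0
    have h1 : r jm * f w ≤ g w := by
      have := sm_key_ge hf hg hco (hrpos jm).le (fun j => B.repr w j)
        (fun j _ => (le_div_iff₀ (hfB j)).mp (hjm j (Finset.mem_univ j)))
      rwa [B.sum_repr w] at this
    have hfw := hf.pos' hw0
    rw [Real.log_le_log_iff (hrpos jm) (div_pos (hg.pos' hw0) hfw), le_div_iff₀ hfw]
    exact h1
  have hBddBelow : ∀ W : {W : Submodule K V // (i : ℕ) + 1 ≤ Module.finrank K W},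
      BddBelow (Set.range fun w : {w : V // w ∈ W.1 ∧ w ≠ 0} =>
        Real.log (g (w : V) / f (w : V))) := by
    intro W
    refine ⟨Real.log (r jm), ?_⟩
    rintro x ⟨w, rfl⟩
    exact glb w w.2.2
  -- upper bound for each W
  have hub : ∀ W : {W : Submodule K V // (i : ℕ) + 1 ≤ Module.finrank K W},
      (⨅ w : {w : V // w ∈ W.1 ∧ w ≠ 0}, Real.log (g (w : V) / f (w : V)))
        ≤ Real.log (r i) := by
    intro W
    have hne : W.1 ⊓ U ≠ ⊥ := by
      intro hbot
      have h1 := Submodule.finrank_sup_add_finrank_inf_eq W.1 U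
      rw [hbot, finrank_bot] at h1
      have h2 : Module.finrank K ↥(W.1 ⊔ U) ≤ N := le_trans (Submodule.finrank_le _) hN.le
      have h3 := W.2
      have h5 : (i : ℕ) < N := i.isLt
      omega
    obtain ⟨w, hw, hw0⟩ := Submodule.exists_mem_ne_zero_of_ne_bot hne
    obtain ⟨hwW, hwU⟩ := Submodule.mem_inf.mp hw
    refine le_trans (ciInf_le (hBddBelow W) ⟨w, hwW, hw0⟩) ?_
    have hfw := hf.pos' hw0
    rw [Real.log_le_log_iff (div_pos (hg.pos' hw0) hfw) (hrpos i), div_le_iff₀ hfw]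
    exact tail_le w hwU hw0
  have hBddAbove : BddAbove (Set.range
      fun W : {W : Submodule K V // (i : ℕ) + 1 ≤ Module.finrank K W} =>
        ⨅ w : {w : V // w ∈ W.1 ∧ w ≠ 0}, Real.log (g (w : V) / f (w : V))) := by
    refine ⟨Real.log (r i), ?_⟩
    rintro x ⟨W, rfl⟩
    exact hub W
  haveI : Nonempty {W : Submodule K V // (i : ℕ) + 1 ≤ Module.finrank K W} :=
    ⟨⟨⊤, by rw [finrank_top, hN]; exact i.isLt⟩⟩
  rw [lamMin]
  refine le_antisymm (ciSup_le hub) ?_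
  have hW₀le : (i : ℕ) + 1 ≤ Module.finrank K W₀ := hW₀rank.ge
  refine le_trans ?_ (le_ciSup hBddAbove ⟨W₀, hW₀le⟩)
  haveI : Nonempty {w : V // w ∈ W₀ ∧ w ≠ 0} :=
    ⟨⟨B i, B.self_mem_span_image.mpr (by simp), B.ne_zero i⟩⟩
  refine le_ciInf ?_
  rintro ⟨w, hw, hw0⟩
  have hfw := hf.pos' hw0
  rw [Real.log_le_log_iff (hrpos i) (div_pos (hg.pos' hw0) hfw), le_div_iff₀ hfw]
  exact head_ge w hw hw0
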